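/- Let N ≥ 1, 0 < λ ≤ Λ, d > 0 and b ∈ ℝ. There exists δ > 0, depending only on λ, Λ, N, d and b, such that for every bounded open set Ω ⊆ ℝ^N with diam(Ω) ≤ d and Lebesgue measure meas(Ω) < δ, every function c : Ω → ℝ with c(x) ≤ b for all x ∈ Ω, and every u ∈ C²(Ω) ∩ C(Ω̄) satisfying M⁻_{λ,Λ}(D²u)(x) + c(x)·u(x) ≤ 0 for all x ∈ Ω and u ≥ 0 on ∂Ω, one has u ≥ 0 in Ω. -/

import Mathlib

/-!
Alexandrov–Bakelman–Pucci argument. Suppose `u` attains a negative minimum `-m` on `closure Ω`.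
For `‖p‖ < m / d` the function `u - ⟪p, ·⟫` attains its minimum on `closure Ω` at a point where
`u < 0`, hence inside `Ω`, with `∇u = p` and `D²u ≥ 0`: the gradient maps this lower contact set
onto the ball of radius `m / d`. On the contact set `M⁻(D²u) = λ tr D²u ≤ -c u ≤ B m` with
`B = max b 1`, so `det D²u ≤ (tr D²u)^N ≤ (B m / λ)^N`, and the area formula gives
`(m / d)^N |B₁| ≤ (B m / λ)^N |Ω|`, that is `|Ω| ≥ (λ / (d B))^N |B₁|`.
-/

noncomputable def puccPlus {n : ℕ} (lam Lam : ℝ) (A : Matrix (Fin n) (Fin n) ℝ) : ℝ :=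
  if hA : A.IsHermitian then
    ∑ i, (if 0 < hA.eigenvalues i then Lam * hA.eigenvalues i else lam * hA.eigenvalues i)
  else 0

noncomputable def puccMinus {n : ℕ} (lam Lam : ℝ) (A : Matrix (Fin n) (Fin n) ℝ) : ℝ :=
  if hA : A.IsHermitian then
    ∑ i, (if 0 < hA.eigenvalues i then lam * hA.eigenvalues i else Lam * hA.eigenvalues i)
  else 0

noncomputable def hessianMat {N : ℕ} (u : EuclideanSpace ℝ (Fin N) → ℝ)
    (x : EuclideanSpace ℝ (Fin N)) : Matrix (Fin N) (Fin N) ℝ :=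
  fun i j => iteratedFDeriv ℝ 2 u x ![EuclideanSpace.single i (1:ℝ), EuclideanSpace.single j 1]

def C2Cont {N : ℕ} (Ω : Set (EuclideanSpace ℝ (Fin N))) (u : EuclideanSpace ℝ (Fin N) → ℝ) : Prop :=
  ContDiffOn ℝ 2 u Ω ∧ ContinuousOn u (closure Ω)

def IsRegularBoundedDomain {N : ℕ} (Ω : Set (EuclideanSpace ℝ (Fin N))) : Prop :=
  IsOpen Ω ∧ IsConnected Ω ∧ Bornology.IsBounded Ω ∧
    ∃ ρ : ℝ, 0 < ρ ∧ ∀ x ∈ frontier Ω,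
      (∃ y, Metric.ball y ρ ⊆ Ω ∧ dist x y = ρ) ∧
      (∃ y, Metric.ball y ρ ⊆ (closure Ω)ᶜ ∧ dist x y = ρ)

def PosEigenpair {N : ℕ} (lam Lam : ℝ) (Ω : Set (EuclideanSpace ℝ (Fin N)))
    (μ : ℝ) (φ : EuclideanSpace ℝ (Fin N) → ℝ) : Prop :=
  C2Cont Ω φ ∧ (∀ x ∈ Ω, 0 < φ x) ∧ (∀ x ∈ frontier Ω, φ x = 0) ∧
    ∀ x ∈ Ω, -puccPlus lam Lam (hessianMat φ x) = μ * φ x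

def NegEigenpair {N : ℕ} (lam Lam : ℝ) (Ω : Set (EuclideanSpace ℝ (Fin N)))
    (μ : ℝ) (φ : EuclideanSpace ℝ (Fin N) → ℝ) : Prop :=
  C2Cont Ω φ ∧ (∀ x ∈ Ω, φ x < 0) ∧ (∀ x ∈ frontier Ω, φ x = 0) ∧
    ∀ x ∈ Ω, -puccPlus lam Lam (hessianMat φ x) = μ * φ x

def IsEigenvalueP {N : ℕ} (lam Lam : ℝ) (Ω : Set (EuclideanSpace ℝ (Fin N))) (μ : ℝ) : Prop :=
  ∃ u, C2Cont Ω u ∧ (∃ x ∈ Ω, u x ≠ 0) ∧ (∀ x ∈ frontier Ω, u x = 0) ∧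
    ∀ x ∈ Ω, -puccPlus lam Lam (hessianMat u x) = μ * u x


open Filter Set Metric InnerProductSpace MeasureTheory
open scoped Topology

theorem IsLocalMin.deriv_deriv_nonneg {f : ℝ → ℝ} {x₀ : ℝ} (hmin : IsLocalMin f x₀)
    (hc : ContinuousAt f x₀) : 0 ≤ deriv (deriv f) x₀ := by
  by_contra! hneg
  have hmax := isLocalMax_of_deriv_deriv_neg hneg hmin.deriv_eq_zero hc
  have hconst : f =ᶠ[𝓝 x₀] fun _ => f x₀ := by
    filter_upwards [hmin, hmax] with x hx₁ hx₂ using le_antisymm hx₂ hx₁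
  have hderiv : deriv f =ᶠ[𝓝 x₀] fun _ => 0 := by
    filter_upwards [hconst.eventuallyEq_nhds] with x hx
    rw [hx.deriv_eq, deriv_const]
  rw [hderiv.deriv_eq, deriv_const] at hneg
  exact hneg.false

theorem IsLocalMin.fderiv_fderiv_apply_self_nonneg {E : Type*} [NormedAddCommGroup E]
    [NormedSpace ℝ E] {u : E → ℝ} {x : E} (hmin : IsLocalMin u x)
    (hu : ∀ᶠ y in 𝓝 x, DifferentiableAt ℝ u y) (hu' : DifferentiableAt ℝ (fderiv ℝ u) x)
    (v : E) : 0 ≤ fderiv ℝ (fderiv ℝ u) x v v := by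
  set c : ℝ → E := fun t => x + t • v
  have hc : ∀ t, HasDerivAt c v t := fun t => by
    have := ((hasDerivAt_id t).smul_const v).const_add x
    rwa [one_smul] at this
  have hc0 : c 0 = x := by simp [c]
  have hA : HasFDerivAt (fderiv ℝ u) (fderiv ℝ (fderiv ℝ u) x) (c 0) := by
    rw [hc0]; exact hu'.hasFDerivAt
  have hcx : Tendsto c (𝓝 0) (𝓝 x) := hc0 ▸ (hc 0).continuousAt.tendsto
  have hderiv : deriv (u ∘ c) =ᶠ[𝓝 0] fun t => fderiv ℝ u (c t) v := by
    filter_upwards [hcx.eventually hu] with t ht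
    exact (ht.hasFDerivAt.comp_hasDerivAt t (hc t)).deriv
  have hderiv2 : HasDerivAt (fun t => fderiv ℝ u (c t) v) (fderiv ℝ (fderiv ℝ u) x v v) 0 :=
    (ContinuousLinearMap.apply ℝ ℝ v).hasFDerivAt.comp_hasDerivAt 0
      (hA.comp_hasDerivAt 0 (hc 0))
  have hmin' : IsLocalMin (u ∘ c) 0 := (hc0 ▸ hmin).comp_continuous (hc 0).continuousAt
  have hcont : ContinuousAt (u ∘ c) 0 :=
    (hc0 ▸ hu.self_of_nhds.continuousAt).comp (hc 0).continuousAt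
  calc 0 ≤ deriv (deriv (u ∘ c)) 0 := hmin'.deriv_deriv_nonneg hcont
    _ = _ := by rw [hderiv.deriv_eq, hderiv2.deriv]

theorem ContDiffOn.differentiableAt_fderiv_of_isOpen {E F : Type*} [NormedAddCommGroup E]
    [NormedSpace ℝ E] [NormedAddCommGroup F] [NormedSpace ℝ F] {f : E → F} {s : Set E}
    (hf : ContDiffOn ℝ 2 f s) (hs : IsOpen s) {x : E} (hx : x ∈ s) :
    DifferentiableAt ℝ (fderiv ℝ f) x :=
  ((hf.fderiv_of_isOpen (m := 1) hs (by norm_num)).differentiableOn one_ne_zero).differentiableAt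
    (hs.mem_nhds hx)

section ContactSet

variable {E : Type*} [NormedAddCommGroup E] [NormedSpace ℝ E] {Ω : Set E} {u : E → ℝ}

def lowerContactSet (Ω : Set E) (u : E → ℝ) : Set E :=
  {y ∈ Ω | u y ≤ 0 ∧ ∀ v, 0 ≤ fderiv ℝ (fderiv ℝ u) y v v}

theorem measurableSet_lowerContactSet [MeasurableSpace E] [BorelSpace E] (hΩ : IsOpen Ω)
    (hu : ContDiffOn ℝ 2 u Ω) : MeasurableSet (lowerContactSet Ω u) := by
  have hA : ContinuousOn (fderiv ℝ (fderiv ℝ u)) Ω :=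
    (hu.fderiv_of_isOpen hΩ (by norm_num)).continuousOn_fderiv_of_isOpen hΩ le_rfl
  have hopen : IsOpen ((Ω ∩ u ⁻¹' Ioi 0) ∪
      ⋃ v, Ω ∩ (fun y => fderiv ℝ (fderiv ℝ u) y v v) ⁻¹' Iio 0) :=
    (hu.continuousOn.isOpen_inter_preimage hΩ isOpen_Ioi).union <| isOpen_iUnion fun v =>
      ((hA.clm_apply continuousOn_const).clm_apply continuousOn_const).isOpen_inter_preimage
        hΩ isOpen_Iio
  have hΓ : lowerContactSet Ω u = Ω \ ((Ω ∩ u ⁻¹' Ioi 0) ∪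
      ⋃ v, Ω ∩ (fun y => fderiv ℝ (fderiv ℝ u) y v v) ⁻¹' Iio 0) := by
    ext y
    simp only [lowerContactSet, mem_ofPred_eq, Set.mem_sdiff, mem_union, mem_inter_iff,
      mem_preimage, mem_Ioi, mem_Iio, mem_iUnion, not_or, not_and, not_exists, not_lt]
    tauto
  rw [hΓ]
  exact hΩ.measurableSet.diff hopen.measurableSet

theorem mem_lowerContactSet_of_isLocalMin_sub (hΩ : IsOpen Ω) (hu : ContDiffOn ℝ 2 u Ω)
    {y : E} (hy : y ∈ Ω) (huy : u y ≤ 0) {ℓ : E →L[ℝ] ℝ}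
    (hmin : IsLocalMin (fun x => u x - ℓ x) y) :
    y ∈ lowerContactSet Ω u ∧ fderiv ℝ u y = ℓ := by
  have hφ' : ∀ x ∈ Ω, HasFDerivAt (fun x => u x - ℓ x) (fderiv ℝ u x - ℓ) x := fun x hx =>
    ((hu.differentiableOn two_ne_zero).differentiableAt (hΩ.mem_nhds hx)).hasFDerivAt.sub
      ℓ.hasFDerivAt
  have hfderiv : fderiv ℝ (fun x => u x - ℓ x) =ᶠ[𝓝 y] fun x => fderiv ℝ u x - ℓ := by
    filter_upwards [hΩ.mem_nhds hy] with x hx using (hφ' x hx).fderiv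
  have hsecond : fderiv ℝ (fderiv ℝ fun x => u x - ℓ x) y = fderiv ℝ (fderiv ℝ u) y := by
    rw [hfderiv.fderiv_eq, fderiv_sub_const]
  refine ⟨⟨hy, huy, fun v => hsecond ▸ hmin.fderiv_fderiv_apply_self_nonneg ?_ ?_ v⟩,
    sub_eq_zero.1 (hmin.hasFDerivAt_eq_zero (hφ' y hy))⟩
  · filter_upwards [hΩ.mem_nhds hy] with x hx using (hφ' x hx).differentiableAt
  · exact ((hu.differentiableAt_fderiv_of_isOpen hΩ hy).sub_const ℓ).congr_of_eventuallyEq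
      hfderiv

end ContactSet

section Gradient

variable {E : Type*} [NormedAddCommGroup E] [InnerProductSpace ℝ E] {Ω : Set E} {u : E → ℝ}

theorem hasFDerivAt_gradient [CompleteSpace E] {y : E} {A : E →L[ℝ] E →L[ℝ] ℝ}
    (h : HasFDerivAt (fderiv ℝ u) A y) :
    HasFDerivAt (gradient u) ((toDual ℝ E).symm.toLinearIsometry.toContinuousLinearMap.comp A) y :=
  (toDual ℝ E).symm.toLinearIsometry.toContinuousLinearMap.hasFDerivAt.comp y h

theorem gradient_eq_of_hasFDerivAt_innerSL [CompleteSpace E] {y p : E}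
    (h : HasFDerivAt u (innerSL ℝ p) y) :
    gradient u y = p := by
  have : toDual ℝ E p = innerSL ℝ p := by ext; simp
  rw [gradient, h.fderiv, ← this, LinearIsometryEquiv.symm_apply_apply]

variable [FiniteDimensional ℝ E]

theorem mem_gradient_image_lowerContactSet (hΩ : IsOpen Ω) (hbdd : Bornology.IsBounded Ω)
    {d : ℝ} (hdiam : diam Ω ≤ d) (hu : ContDiffOn ℝ 2 u Ω) (hcont : ContinuousOn u (closure Ω))
    (hbdry : ∀ x ∈ frontier Ω, 0 ≤ u x) {z p : E} (hz : z ∈ closure Ω) (hp : ‖p‖ * d < -u z) :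
    p ∈ gradient u '' lowerContactSet Ω u := by
  obtain ⟨y, hyΩ', hymin⟩ := hbdd.isCompact_closure.exists_isMinOn ⟨z, hz⟩
    (hcont.sub (innerSL ℝ p).continuous.continuousOn)
  have huy : u y < 0 := by
    have hyz : u y - innerSL ℝ p y ≤ u z - innerSL ℝ p z := hymin hz
    have hdist : ‖y - z‖ ≤ d := calc
      ‖y - z‖ = dist y z := (dist_eq_norm y z).symm
      _ ≤ diam (closure Ω) := dist_le_diam_of_mem hbdd.closure hyΩ' hz
      _ = diam Ω := diam_closure Ω
      _ ≤ d := hdiam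
    have hinner : innerSL ℝ p y - innerSL ℝ p z ≤ ‖p‖ * d := by
      rw [← map_sub, innerSL_apply_apply]
      exact (real_inner_le_norm _ _).trans (mul_le_mul_of_nonneg_left hdist (norm_nonneg p))
    linarith
  have hyΩ : y ∈ Ω := by
    by_contra hy
    exact (hbdry y ⟨hyΩ', by rwa [hΩ.interior_eq]⟩).not_gt huy
  obtain ⟨hyΓ, hgrad⟩ := mem_lowerContactSet_of_isLocalMin_sub hΩ hu hyΩ huy.le
    (hymin.isLocalMin (mem_of_superset (hΩ.mem_nhds hyΩ) subset_closure))
  exact ⟨y, hyΓ, gradient_eq_of_hasFDerivAt_innerSL (hgrad ▸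
    ((hu.differentiableOn two_ne_zero).differentiableAt (hΩ.mem_nhds hyΩ)).hasFDerivAt)⟩

theorem volume_ball_le_ofReal_mul_volume [MeasureSpace E] [BorelSpace E]
    [(volume : Measure E).IsAddHaarMeasure] (hΩ : IsOpen Ω) (hbdd : Bornology.IsBounded Ω)
    {d : ℝ} (hd : 0 < d) (hdiam : diam Ω ≤ d) (hu : ContDiffOn ℝ 2 u Ω)
    (hcont : ContinuousOn u (closure Ω)) (hbdry : ∀ x ∈ frontier Ω, 0 ≤ u x) {z : E}
    (hz : z ∈ closure Ω) {K : ℝ}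
    (hK : ∀ y ∈ lowerContactSet Ω u, |(fderiv ℝ (gradient u) y).det| ≤ K) :
    volume (ball (0 : E) (-u z / d)) ≤ ENNReal.ofReal K * volume Ω := by
  have hgrad : ∀ y ∈ Ω, HasFDerivAt (gradient u) (fderiv ℝ (gradient u) y) y := fun y hy =>
    (hasFDerivAt_gradient (hu.differentiableAt_fderiv_of_isOpen hΩ hy).hasFDerivAt
      ).differentiableAt.hasFDerivAt
  calc volume (ball (0 : E) (-u z / d))
      ≤ volume (gradient u '' lowerContactSet Ω u) := measure_mono fun p hp =>
        mem_gradient_image_lowerContactSet hΩ hbdd hdiam hu hcont hbdry hz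
          ((lt_div_iff₀ hd).1 (mem_ball_zero_iff.1 hp))
    _ ≤ ∫⁻ y in lowerContactSet Ω u, ENNReal.ofReal |(fderiv ℝ (gradient u) y).det| :=
        addHaar_image_le_lintegral_abs_det_fderiv volume (measurableSet_lowerContactSet hΩ hu)
          fun y hy => (hgrad y hy.1).hasFDerivWithinAt
    _ ≤ ∫⁻ _ in lowerContactSet Ω u, ENNReal.ofReal K :=
        setLIntegral_mono measurable_const fun y hy => ENNReal.ofReal_le_ofReal (hK y hy)
    _ = ENNReal.ofReal K * volume (lowerContactSet Ω u) := setLIntegral_const _ _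
    _ ≤ ENNReal.ofReal K * volume Ω := by gcongr; exact fun y hy => hy.1

end Gradient

namespace Matrix

theorem PosSemidef.puccMinus_eq {n : ℕ} {H : Matrix (Fin n) (Fin n) ℝ} (hH : H.PosSemidef)
    (lam Lam : ℝ) : puccMinus lam Lam H = lam * H.trace := by
  rw [puccMinus, dif_pos hH.1, hH.1.trace_eq_sum_eigenvalues, Finset.mul_sum]
  refine Finset.sum_congr rfl fun i _ => ?_
  split_ifs with h
  · simp
  · simp [le_antisymm (not_lt.1 h) (hH.eigenvalues_nonneg i)]

theorem PosSemidef.det_le_trace_pow {n : Type*} [Fintype n] [DecidableEq n] {H : Matrix n n ℝ}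
    (hH : H.PosSemidef) : H.det ≤ H.trace ^ Fintype.card n := by
  have heig := hH.eigenvalues_nonneg
  rw [hH.1.det_eq_prod_eigenvalues, hH.1.trace_eq_sum_eigenvalues, ← Finset.card_univ,
    ← Finset.prod_const]
  simp only [RCLike.ofReal_real_eq_id, id]
  exact Finset.prod_le_prod (fun i _ => heig i)
    fun i _ => Finset.single_le_sum (fun j _ => heig j) (Finset.mem_univ i)

end Matrix

section Euclidean

variable {N : ℕ} {u : EuclideanSpace ℝ (Fin N) → ℝ} {y : EuclideanSpace ℝ (Fin N)}

theorem hessianMat_apply (i j : Fin N) :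
    hessianMat u y i j =
      fderiv ℝ (fderiv ℝ u) y (EuclideanSpace.single i 1) (EuclideanSpace.single j 1) := by
  simp [hessianMat, iteratedFDeriv_two_apply]

theorem det_fderiv_gradient (h : DifferentiableAt ℝ (fderiv ℝ u) y) :
    (fderiv ℝ (gradient u) y).det = (hessianMat u y).det := by
  rw [(hasFDerivAt_gradient h.hasFDerivAt).fderiv, ← Matrix.det_transpose, ContinuousLinearMap.det,
    ← LinearMap.det_toMatrix (EuclideanSpace.basisFun (Fin N) ℝ).toBasis]
  congr 1
  ext i j
  rw [LinearMap.toMatrix_apply, Matrix.transpose_apply, hessianMat_apply, ← toDual_symm_apply,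
    real_inner_comm, EuclideanSpace.inner_single_left]
  simp

theorem posSemidef_hessianMat (hsymm : IsSymmSndFDerivAt ℝ u y)
    (hnn : ∀ v, 0 ≤ fderiv ℝ (fderiv ℝ u) y v v) : (hessianMat u y).PosSemidef := by
  refine .of_dotProduct_mulVec_nonneg (by ext i j; simpa [hessianMat_apply] using hsymm _ _)
    fun v => ?_
  have hquad : star v ⬝ᵥ (hessianMat u y).mulVec v = fderiv ℝ (fderiv ℝ u) y
      (∑ i, v i • EuclideanSpace.single i 1) (∑ j, v j • EuclideanSpace.single j 1) := by
    simp only [map_sum, map_smul, FunLike.coe_sum, Finset.sum_apply,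
      FunLike.coe_smul, Pi.smul_apply, smul_eq_mul, dotProduct, Matrix.mulVec,
      hessianMat_apply, star_trivial, Finset.mul_sum]
    refine Finset.sum_congr rfl fun i _ => Finset.sum_congr rfl fun j _ => ?_
    rw [hsymm]
    ring
  exact hquad ▸ hnn _

variable {Ω : Set (EuclideanSpace ℝ (Fin N))}

theorem abs_det_fderiv_gradient_le {lam Lam K : ℝ} (hlam : 0 < lam)
    (hΩ : IsOpen Ω) (hu : ContDiffOn ℝ 2 u Ω) (hy : y ∈ lowerContactSet Ω u)
    (h : puccMinus lam Lam (hessianMat u y) ≤ lam * K) :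
    |(fderiv ℝ (gradient u) y).det| ≤ K ^ N := by
  have hpsd := posSemidef_hessianMat
    ((hu.contDiffAt (hΩ.mem_nhds hy.1)).isSymmSndFDerivAt (by simp)) hy.2.2
  have htrace : (hessianMat u y).trace ≤ K :=
    le_of_mul_le_mul_left (hpsd.puccMinus_eq lam Lam ▸ h) hlam
  rw [det_fderiv_gradient (hu.differentiableAt_fderiv_of_isOpen hΩ hy.1),
    abs_of_nonneg hpsd.det_nonneg]
  calc _ ≤ (hessianMat u y).trace ^ N := by simpa using hpsd.det_le_trace_pow
    _ ≤ K ^ N := pow_le_pow_left₀ hpsd.trace_nonneg htrace N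

theorem le_volume_of_isMinOn_neg {lam Lam d b : ℝ} (hlam : 0 < lam) (hd : 0 < d) (hΩ : IsOpen Ω)
    (hbdd : Bornology.IsBounded Ω) (hdiam : diam Ω ≤ d) {c : EuclideanSpace ℝ (Fin N) → ℝ}
    (hc : ∀ x ∈ Ω, c x ≤ b) (hu : C2Cont Ω u)
    (hpde : ∀ x ∈ Ω, puccMinus lam Lam (hessianMat u x) + c x * u x ≤ 0)
    (hbdry : ∀ x ∈ frontier Ω, 0 ≤ u x) {z : EuclideanSpace ℝ (Fin N)} (hz : z ∈ closure Ω)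
    (hmin : IsMinOn u (closure Ω) z) (hneg : u z < 0) :
    ENNReal.ofReal ((lam / (d * max b 1)) ^ N) * volume (ball (0 : EuclideanSpace ℝ (Fin N)) 1)
      ≤ volume Ω := by
  set B := max b 1
  have hB : 0 < B := lt_max_of_lt_right one_pos
  have hm : 0 < -u z := neg_pos.2 hneg
  set K := B * -u z / lam with hK_def
  have hK₀ : 0 < K := div_pos (mul_pos hB hm) hlam
  have hK : ∀ y ∈ lowerContactSet Ω u, |(fderiv ℝ (gradient u) y).det| ≤ K ^ N := by
    intro y hy
    refine abs_det_fderiv_gradient_le (Lam := Lam) hlam hΩ hu.1 hy ?_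
    calc puccMinus lam Lam (hessianMat u y) ≤ c y * -u y := by linarith [hpde y hy.1]
      _ ≤ B * -u z := mul_le_mul ((hc y hy.1).trans (le_max_left _ _))
          (neg_le_neg (hmin (subset_closure hy.1))) (neg_nonneg.2 hy.2.1) hB.le
      _ = lam * K := by rw [hK_def]; field_simp
  have hball := volume_ball_le_ofReal_mul_volume hΩ hbdd hd hdiam hu.1 hu.2 hbdry hz hK
  have hsplit : (-u z / d) ^ N = K ^ N * (lam / (d * B)) ^ N := by
    rw [← mul_pow, hK_def]; congr 1; field_simp
  rw [Measure.addHaar_ball_of_pos _ _ (div_pos hm hd), finrank_euclideanSpace_fin,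
    hsplit, ENNReal.ofReal_mul (by positivity), mul_assoc] at hball
  exact (ENNReal.mul_le_mul_iff_right (ENNReal.ofReal_pos.2 (by positivity)).ne'
    ENNReal.ofReal_ne_top).1 hball

end Euclidean

theorem stmt_9_general {N : ℕ} (lam Lam d b : ℝ)
    (hlam : 0 < lam) (hd : 0 < d) :
    ∃ δ : ℝ, 0 < δ ∧
      ∀ Ω : Set (EuclideanSpace ℝ (Fin N)), IsOpen Ω → Bornology.IsBounded Ω →
        Metric.diam Ω ≤ d → MeasureTheory.volume Ω < ENNReal.ofReal δ →
        ∀ c : EuclideanSpace ℝ (Fin N) → ℝ, (∀ x ∈ Ω, c x ≤ b) →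
        ∀ u : EuclideanSpace ℝ (Fin N) → ℝ, C2Cont Ω u →
          (∀ x ∈ Ω, puccMinus lam Lam (hessianMat u x) + c x * u x ≤ 0) →
          (∀ x ∈ frontier Ω, 0 ≤ u x) →
          ∀ x ∈ Ω, 0 ≤ u x := by
  set ω := volume (ball (0 : EuclideanSpace ℝ (Fin N)) 1)
  have hω : ω ≠ ⊤ := measure_ball_lt_top.ne
  have hω₀ : 0 < ω.toReal := ENNReal.toReal_pos (measure_ball_pos _ _ one_pos).ne' hω
  refine ⟨(lam / (d * max b 1)) ^ N * ω.toReal, by positivity, ?_⟩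
  intro Ω hΩ hbdd hdiam hvol c hc u hu hpde hbdry x hx
  by_contra! hneg
  obtain ⟨z, hz, hmin⟩ := hbdd.isCompact_closure.exists_isMinOn ⟨x, subset_closure hx⟩ hu.2
  have hlarge := le_volume_of_isMinOn_neg hlam hd hΩ hbdd hdiam hc hu hpde hbdry hz hmin
    ((hmin (subset_closure hx)).trans_lt hneg)
  rw [ENNReal.ofReal_mul (by positivity), ENNReal.ofReal_toReal hω] at hvol
  exact hlarge.not_gt hvol

/-- maximum principle in domains of small measure for `M⁻_{λ,Λ}`. -/
theorem stmt_9 {N : ℕ} (hN : 1 ≤ N) (lam Lam d b : ℝ)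
    (hlam : 0 < lam) (hlL : lam ≤ Lam) (hd : 0 < d) :
    ∃ δ : ℝ, 0 < δ ∧
      ∀ Ω : Set (EuclideanSpace ℝ (Fin N)), IsOpen Ω → Bornology.IsBounded Ω →
        Metric.diam Ω ≤ d → MeasureTheory.volume Ω < ENNReal.ofReal δ →
        ∀ c : EuclideanSpace ℝ (Fin N) → ℝ, (∀ x ∈ Ω, c x ≤ b) →
        ∀ u : EuclideanSpace ℝ (Fin N) → ℝ, C2Cont Ω u →
          (∀ x ∈ Ω, puccMinus lam Lam (hessianMat u x) + c x * u x ≤ 0) →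
          (∀ x ∈ frontier Ω, 0 ≤ u x) →
          ∀ x ∈ Ω, 0 ≤ u x :=
  stmt_9_general lam Lam d b hlam hd
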